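/- arXiv:2508.03896 — 2 statements merged into one kernel-verified Lean document; each statement's English description precedes it below -/
import Mathlib

section
/- Let n ≥ 1, y : Fin n → Y the true labels over a finite label type Y, and Φ : Fin n → Y → ℝ^d a feature mapping. Let τ = (1/n)∑_i Φ i (y i). Then for any group I ⊆ Fin n with I nonempty, any label ŷ ∈ Y, and any μ ∈ ℝ^d: the true label proportion p*(ŷ) = (1/|I|)∑_{i∈I} I{y i = ŷ} satisfies p*(ŷ) ≤ −τᵀμ + (1/n)∑_{i=1}^n max_{ỹ ∈ Y} (Φ i ỹ ᵀ μ + (n/|I|)·I{i ∈ I and ỹ = ŷ}). -/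
theorem weak_duality_upper_bound {Y : Type*} [Fintype Y] [Nonempty Y]
    [DecidableEq Y] {n d : ℕ} (hn : 1 ≤ n)
    (y : Fin n → Y) (Φ : Fin n → Y → Fin d → ℝ) (tau : Fin d → ℝ)
    (htau : ∀ j, tau j = (1 / (n : ℝ)) * ∑ i, Φ i (y i) j)
    (I : Finset (Fin n)) (hI : I.Nonempty) (yh : Y) (μ : Fin d → ℝ) :
    (1 / (I.card : ℝ)) * ∑ i ∈ I, (if y i = yh then (1 : ℝ) else 0) ≤
      -(∑ j, tau j * μ j) +
        (1 / (n : ℝ)) * ∑ i, (Finset.univ.sup' Finset.univ_nonempty fun yt =>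
          (∑ j, Φ i yt j * μ j) +
            ((n : ℝ) / (I.card : ℝ)) *
              (if i ∈ I ∧ yt = yh then (1 : ℝ) else 0)) := by
  have hn0 : (0:ℝ) < n := by exact_mod_cast hn
  have hc0 : (0:ℝ) < I.card := by exact_mod_cast Finset.card_pos.mpr hI
  have key : (1 / (I.card : ℝ)) * ∑ i ∈ I, (if y i = yh then (1 : ℝ) else 0) =
      -(∑ j, tau j * μ j) +
        (1 / (n : ℝ)) * ∑ i, ((∑ j, Φ i (y i) j * μ j) +
            ((n : ℝ) / (I.card : ℝ)) * (if i ∈ I ∧ y i = yh then (1 : ℝ) else 0)) := by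
    have h1 : ∑ j, tau j * μ j = (1/(n:ℝ)) * ∑ i, ∑ j, Φ i (y i) j * μ j := by
      simp only [htau, Finset.mul_sum, Finset.sum_mul]
      rw [Finset.sum_comm]
      ring_nf
    have h2 : ∑ i, ((n : ℝ) / (I.card : ℝ)) * (if i ∈ I ∧ y i = yh then (1 : ℝ) else 0)
        = ((n : ℝ) / (I.card : ℝ)) * ∑ i ∈ I, (if y i = yh then (1 : ℝ) else 0) := by
      rw [← Finset.mul_sum]
      congr 1
      rw [← Finset.sum_subset I.subset_univ (by intro x _ hx; simp [hx])]
      exact Finset.sum_congr rfl (fun x hx => by simp [hx])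
    rw [h1, Finset.sum_add_distrib, h2]
    field_simp
    ring
  rw [key]
  gcongr with i _
  exact Finset.le_sup' (fun yt => (∑ j, Φ i yt j * μ j) + ((n : ℝ) / (I.card : ℝ)) * (if i ∈ I ∧ yt = yh then (1 : ℝ) else 0)) (Finset.mem_univ (y i))
end

section
/- Let n ≥ 1, y : Fin n → Y true labels over a finite type Y, Φ : Fin n → Y → ℝ^d, τ = (1/n)∑_i Φ i (y i), and let τ̂ ∈ ℝ^d, λ ∈ ℝ^d with λ ≥ 0 componentwise. For μ* ∈ ℝ^d define the minimax risk value R = −τ̂ᵀμ* + λᵀ|μ*| + (1/n)∑_i log(∑_{ỹ} exp(Φ i ỹ ᵀ μ*)) and predictions h_i(ŷ) = exp(Φ i ŷ ᵀ μ*)/∑_{ỹ} exp(Φ i ỹ ᵀ μ*). Then (1/n)∑_{i=1}^n (−log h_i(y i)) ≤ R + (|τ − τ̂| − λ)ᵀ|μ*|. -/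
/-!
Each `h i` is a softmax, so `-log (h i (y i)) = log Zᵢ - Φ i (y i) ⬝ μ*` with `Zᵢ` the
partition function. Averaging turns the linear terms into `τ ⬝ μ*`, so the mean log loss is
`R + (τ̂ - τ) ⬝ μ* - λ ⬝ |μ*|`, and `(τ̂ - τ) ⬝ μ* ≤ |τ - τ̂| ⬝ |μ*|` termwise.
-/

open Finset Real

theorem neg_log_exp_div_sum_exp {ι : Type*} [Fintype ι] (f : ι → ℝ) (a : ι) :
    -log (exp (f a) / ∑ b, exp (f b)) = log (∑ b, exp (f b)) - f a := by
  have hZ : 0 < ∑ b, exp (f b) := sum_pos (fun b _ => exp_pos (f b)) ⟨a, mem_univ a⟩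
  rw [log_div (exp_ne_zero _) hZ.ne', log_exp, neg_sub]

theorem sum_const_mul_sum_mul {ι κ : Type*} [Fintype κ] (s : Finset ι) (c : ℝ)
    (F : ι → κ → ℝ) (μ : κ → ℝ) :
    ∑ j, (c * ∑ i ∈ s, F i j) * μ j = c * ∑ i ∈ s, ∑ j, F i j * μ j := by
  simp only [mul_sum, sum_mul, mul_assoc]
  exact sum_comm

theorem sum_mul_le_sum_abs_mul_abs {κ : Type*} (s : Finset κ) (v μ : κ → ℝ) :
    ∑ j ∈ s, v j * μ j ≤ ∑ j ∈ s, |v j| * |μ j| :=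
  sum_le_sum fun _ _ => (le_abs_self _).trans (abs_mul _ _).le

theorem log_loss_risk_bound_general {Y : Type*} [Fintype Y]
    {n d : ℕ}
    (y : Fin n → Y) (Φ : Fin n → Y → Fin d → ℝ) (tau that lam : Fin d → ℝ)
    (htau : ∀ j, tau j = (1 / (n : ℝ)) * ∑ i, Φ i (y i) j)
    (μstar : Fin d → ℝ) (R : ℝ)
    (hR : R = -(∑ j, that j * μstar j) + (∑ j, lam j * |μstar j|) +
      (1 / (n : ℝ)) * ∑ i, Real.log (∑ yt, Real.exp (∑ j, Φ i yt j * μstar j)))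
    (h : Fin n → Y → ℝ)
    (hh : ∀ i yh, h i yh =
      Real.exp (∑ j, Φ i yh j * μstar j) /
        ∑ yt, Real.exp (∑ j, Φ i yt j * μstar j)) :
    (1 / (n : ℝ)) * ∑ i, -Real.log (h i (y i)) ≤
      R + ∑ j, (|tau j - that j| - lam j) * |μstar j| := by
  have hloss : ∀ i, -log (h i (y i)) =
      log (∑ yt, exp (∑ j, Φ i yt j * μstar j)) - ∑ j, Φ i (y i) j * μstar j := fun i => by
    rw [hh]
    exact neg_log_exp_div_sum_exp (fun yt => ∑ j, Φ i yt j * μstar j) (y i)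
  have hmean : ∑ j, tau j * μstar j = (1 / (n : ℝ)) * ∑ i, ∑ j, Φ i (y i) j * μstar j := by
    simp only [htau]
    exact sum_const_mul_sum_mul univ _ (fun i => Φ i (y i)) μstar
  have hdev := sum_mul_le_sum_abs_mul_abs univ (fun j => that j - tau j) μstar
  simp only [abs_sub_comm (that _), sub_mul, sum_sub_distrib] at hdev
  simp only [hloss, hR, sum_sub_distrib, mul_sub, sub_mul]
  linarith

theorem log_loss_risk_bound {Y : Type*} [Fintype Y] [Nonempty Y]
    {n d : ℕ} (hn : 1 ≤ n)
    (y : Fin n → Y) (Φ : Fin n → Y → Fin d → ℝ) (tau that lam : Fin d → ℝ)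
    (htau : ∀ j, tau j = (1 / (n : ℝ)) * ∑ i, Φ i (y i) j)
    (hlam : ∀ j, 0 ≤ lam j)
    (μstar : Fin d → ℝ) (R : ℝ)
    (hR : R = -(∑ j, that j * μstar j) + (∑ j, lam j * |μstar j|) +
      (1 / (n : ℝ)) * ∑ i, Real.log (∑ yt, Real.exp (∑ j, Φ i yt j * μstar j)))
    (h : Fin n → Y → ℝ)
    (hh : ∀ i yh, h i yh =
      Real.exp (∑ j, Φ i yh j * μstar j) /
        ∑ yt, Real.exp (∑ j, Φ i yt j * μstar j)) :
    (1 / (n : ℝ)) * ∑ i, -Real.log (h i (y i)) ≤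
      R + ∑ j, (|tau j - that j| - lam j) * |μstar j| :=
  log_loss_risk_bound_general y Φ tau that lam htau μstar R hR h hh
end
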